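/- The linear Toda bracket π₁ and the quadratic Toda bracket π₂ are compatible: π₁ + π₂ satisfies the Jacobi identity. -/

import Mathlib

/-- Index set for Toda variables `(a_1, …, a_{N-1}, b_1, …, b_N)` (0-based). -/
abbrev TodaIdx (N : ℕ) := Fin (N - 1) ⊕ Fin N

/-- The value of the `a`-variable with (0-based) index `m`, zero out of range. -/
noncomputable def av {N : ℕ} (x : TodaIdx N → ℝ) (m : ℕ) : ℝ :=
  if h : m < N - 1 then x (.inl ⟨m, h⟩) else 0

/-- The value of the `b`-variable with (0-based) index `m`, zero out of range. -/
noncomputable def bv {N : ℕ} (x : TodaIdx N → ℝ) (m : ℕ) : ℝ :=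
  if h : m < N then x (.inr ⟨m, h⟩) else 0

/-- Structure matrix of the linear Toda bracket `π₁`:
`{a_i, b_i} = -a_i`, `{a_i, b_{i+1}} = a_i`. -/
noncomputable def linP (N : ℕ) : TodaIdx N → TodaIdx N → (TodaIdx N → ℝ) → ℝ
  | .inl i, .inr j, x =>
      if (j : ℕ) = (i : ℕ) then -(x (.inl i))
      else if (j : ℕ) = (i : ℕ) + 1 then x (.inl i) else 0
  | .inr j, .inl i, x =>
      -(if (j : ℕ) = (i : ℕ) then -(x (.inl i))
        else if (j : ℕ) = (i : ℕ) + 1 then x (.inl i) else 0)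
  | _, _, _ => 0

/-- Structure matrix of the quadratic Toda bracket `π₂`:
`{a_i, a_{i+1}} = ½ a_i a_{i+1}`, `{a_i, b_i} = -a_i b_i`,
`{a_i, b_{i+1}} = a_i b_{i+1}`, `{b_i, b_{i+1}} = 2 a_i²`. -/
noncomputable def quadP (N : ℕ) : TodaIdx N → TodaIdx N → (TodaIdx N → ℝ) → ℝ
  | .inl i, .inl j, x =>
      if (j : ℕ) = (i : ℕ) + 1 then (1/2) * av x i * av x j
      else if (i : ℕ) = (j : ℕ) + 1 then -((1/2) * av x j * av x i) else 0
  | .inl i, .inr j, x =>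
      if (j : ℕ) = (i : ℕ) then -(av x i * bv x j)
      else if (j : ℕ) = (i : ℕ) + 1 then av x i * bv x j else 0
  | .inr j, .inl i, x =>
      -(if (j : ℕ) = (i : ℕ) then -(av x i * bv x j)
        else if (j : ℕ) = (i : ℕ) + 1 then av x i * bv x j else 0)
  | .inr i, .inr j, x =>
      if (j : ℕ) = (i : ℕ) + 1 then 2 * (av x i)^2
      else if (i : ℕ) = (j : ℕ) + 1 then -(2 * (av x j)^2) else 0

/-- Structure matrix of the sum bracket `π₁ + π₂`. -/
noncomputable def sumP (N : ℕ) (u v : TodaIdx N) (x : TodaIdx N → ℝ) : ℝ :=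
  linP N u v x + quadP N u v x

/-- Partial derivative in the `s`-th coordinate direction. -/
noncomputable def pd {N : ℕ} (f : (TodaIdx N → ℝ) → ℝ) (s : TodaIdx N) (x : TodaIdx N → ℝ) : ℝ :=
  fderiv ℝ f x (Pi.single s 1)

/-!
Extend the coordinates by zero to sequences `a b : ℕ → ℝ`. Every structure function of `π₁ + π₂`
becomes a fixed polynomial in finitely many `a i, b j` (`Toda.bracket`), and
`∑ s, P s u * ∂ₛ P v w` is the derivative of `P v w` along the Hamiltonian vector field
`(P (a m) u, P (b m) u)ₘ`. The Jacobi identity for these formulas is then a finite check over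
the coincidences among the indices, uniformly in `N`.
-/

namespace Toda

/-- The structure functions of `π₁ + π₂` on coordinates `aₘ = a m` (`.inl m`), `bₘ = b m` (`.inr m`). -/
noncomputable def bracket (a b : ℕ → ℝ) : ℕ ⊕ ℕ → ℕ ⊕ ℕ → ℝ
  | .inl i, .inl j =>
      if j = i + 1 then a i * a j / 2 else if i = j + 1 then -(a j * a i / 2) else 0
  | .inl i, .inr j =>
      if j = i then -(a i * (1 + b j)) else if j = i + 1 then a i * (1 + b j) else 0
  | .inr j, .inl i =>
      if j = i then a i * (1 + b j) else if j = i + 1 then -(a i * (1 + b j)) else 0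
  | .inr i, .inr j =>
      if j = i + 1 then 2 * a i ^ 2 else if i = j + 1 then -(2 * a j ^ 2) else 0

noncomputable def bracketDeriv (a b da db : ℕ → ℝ) : ℕ ⊕ ℕ → ℕ ⊕ ℕ → ℝ
  | .inl i, .inl j =>
      if j = i + 1 then (da i * a j + a i * da j) / 2
      else if i = j + 1 then -((da j * a i + a j * da i) / 2) else 0
  | .inl i, .inr j =>
      if j = i then -(da i * (1 + b j) + a i * db j)
      else if j = i + 1 then da i * (1 + b j) + a i * db j else 0
  | .inr j, .inl i =>
      if j = i then da i * (1 + b j) + a i * db j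
      else if j = i + 1 then -(da i * (1 + b j) + a i * db j) else 0
  | .inr i, .inr j =>
      if j = i + 1 then 4 * a i * da i else if i = j + 1 then -(4 * a j * da j) else 0

/-- `{{x_v, x_w}, x_u}`: the derivative of `bracket a b v w` along the Hamiltonian vector field
of the coordinate `x_u`. -/
noncomputable def nestedBracket (a b : ℕ → ℝ) (u v w : ℕ ⊕ ℕ) : ℝ :=
  bracketDeriv a b (fun m => bracket a b (.inl m) u) (fun m => bracket a b (.inr m) u) v w

set_option maxHeartbeats 1000000 in
theorem nestedBracket_cyclic (a b : ℕ → ℝ) (u v w : ℕ ⊕ ℕ) :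
    nestedBracket a b u v w + nestedBracket a b v w u + nestedBracket a b w u v = 0 := by
  rcases u with p | p <;> rcases v with q | q <;> rcases w with r | r <;>
    simp only [nestedBracket, bracketDeriv, bracket] <;>
    split_ifs <;> subst_vars <;> first | ring1 | omega

theorem bracket_inl_eq_zero {a : ℕ → ℝ} {m : ℕ} (b : ℕ → ℝ) (ha : a m = 0) (q : ℕ ⊕ ℕ) :
    bracket a b (.inl m) q = 0 := by
  rcases q with j | j <;> simp [bracket, ha]

section Coordinates

variable {N : ℕ}

theorem av_inl (x : TodaIdx N → ℝ) (i : Fin (N - 1)) : av x i = x (.inl i) := dif_pos i.isLt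

theorem bv_inr (x : TodaIdx N → ℝ) (i : Fin N) : bv x i = x (.inr i) := dif_pos i.isLt

theorem av_of_le {x : TodaIdx N → ℝ} {m : ℕ} (hm : N - 1 ≤ m) : av x m = 0 := dif_neg (by omega)

theorem bv_of_le {x : TodaIdx N → ℝ} {m : ℕ} (hm : N ≤ m) : bv x m = 0 := dif_neg (by omega)

@[fun_prop]
theorem differentiableAt_av (m : ℕ) (x : TodaIdx N → ℝ) :
    DifferentiableAt ℝ (fun y => av y m) x := by
  unfold av; split_ifs <;> fun_prop

@[fun_prop]
theorem differentiableAt_bv (m : ℕ) (x : TodaIdx N → ℝ) :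
    DifferentiableAt ℝ (fun y => bv y m) x := by
  unfold bv; split_ifs <;> fun_prop

@[simp]
theorem fderiv_av_apply (m : ℕ) (x y : TodaIdx N → ℝ) :
    fderiv ℝ (fun z => av z m) x y = av y m := by
  unfold av; split_ifs
  · rw [(hasFDerivAt_apply _ x).fderiv]; rfl
  · simp

@[simp]
theorem fderiv_bv_apply (m : ℕ) (x y : TodaIdx N → ℝ) :
    fderiv ℝ (fun z => bv z m) x y = bv y m := by
  unfold bv; split_ifs
  · rw [(hasFDerivAt_apply _ x).fderiv]; rfl
  · simp

theorem fderiv_bracket_apply (p q : ℕ ⊕ ℕ) (x y : TodaIdx N → ℝ) :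
    fderiv ℝ (fun z => bracket (av z) (bv z) p q) x y
      = bracketDeriv (av x) (bv x) (av y) (bv y) p q := by
  rcases p with i | i <;> rcases q with j | j <;> simp only [bracket, bracketDeriv] <;>
    split_ifs <;>
    simp (disch := fun_prop) [div_eq_mul_inv, fderiv_fun_mul, fderiv_fun_neg, fderiv_fun_pow] <;>
    ring

theorem sum_mul_pd (f : (TodaIdx N → ℝ) → ℝ) (g x : TodaIdx N → ℝ) :
    ∑ s, g s * pd f s x = fderiv ℝ f x g := by
  conv_rhs => rw [pi_eq_sum_univ' g]
  simp [pd]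

theorem sumP_eq_bracket (u v : TodaIdx N) (x : TodaIdx N → ℝ) :
    sumP N u v x = bracket (av x) (bv x) (u.map Fin.val Fin.val) (v.map Fin.val Fin.val) := by
  rcases u with i | i <;> rcases v with j | j <;>
    simp only [sumP, linP, quadP, bracket, Sum.map_inl, Sum.map_inr, ← av_inl] <;>
    split_ifs <;> ring

theorem bracket_inr_eq_zero (x : TodaIdx N → ℝ) (u : TodaIdx N) {m : ℕ} (hm : N ≤ m) :
    bracket (av x) (bv x) (.inr m) (u.map Fin.val Fin.val) = 0 := by
  rcases u with ⟨k, hk⟩ | ⟨k, hk⟩ <;> simp only [bracket, Sum.map_inl, Sum.map_inr]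
  · rw [if_neg (by omega : m ≠ k), if_neg (by omega : m ≠ k + 1)]
  · rw [if_neg (by omega : k ≠ m + 1)]
    split_ifs with hmk
    · rw [av_of_le (by omega : N - 1 ≤ k)]
      ring
    · rfl

theorem av_sumP (u : TodaIdx N) (x : TodaIdx N → ℝ) (m : ℕ) :
    av (fun s => sumP N s u x) m = bracket (av x) (bv x) (.inl m) (u.map Fin.val Fin.val) := by
  rcases lt_or_ge m (N - 1) with hm | hm
  · exact (av_inl _ ⟨m, hm⟩).trans (sumP_eq_bracket _ u x)
  · rw [av_of_le hm, bracket_inl_eq_zero _ (av_of_le hm)]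

theorem bv_sumP (u : TodaIdx N) (x : TodaIdx N → ℝ) (m : ℕ) :
    bv (fun s => sumP N s u x) m = bracket (av x) (bv x) (.inr m) (u.map Fin.val Fin.val) := by
  rcases lt_or_ge m N with hm | hm
  · exact (bv_inr _ ⟨m, hm⟩).trans (sumP_eq_bracket _ u x)
  · rw [bv_of_le hm, bracket_inr_eq_zero x u hm]

theorem sum_sumP_mul_pd_sumP (u v w : TodaIdx N) (x : TodaIdx N → ℝ) :
    ∑ s, sumP N s u x * pd (sumP N v w) s x
      = nestedBracket (av x) (bv x) (u.map Fin.val Fin.val) (v.map Fin.val Fin.val)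
          (w.map Fin.val Fin.val) := by
  have hvw : sumP N v w = fun z => bracket (av z) (bv z) (v.map Fin.val Fin.val)
      (w.map Fin.val Fin.val) := funext (sumP_eq_bracket v w)
  rw [sum_mul_pd, hvw, fderiv_bracket_apply, funext (av_sumP u x), funext (bv_sumP u x)]
  rfl

end Coordinates

end Toda

/-- The linear and quadratic Toda brackets are compatible: `π₁ + π₂` satisfies
the Jacobi identity. -/
theorem linQuadToda_compatible (N : ℕ) (x : TodaIdx N → ℝ) (u v w : TodaIdx N) :
    ∑ s : TodaIdx N, (sumP N s u x * pd (sumP N v w) s x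
      + sumP N s v x * pd (sumP N w u) s x
      + sumP N s w x * pd (sumP N u v) s x) = 0 := by
  rw [Finset.sum_add_distrib, Finset.sum_add_distrib, Toda.sum_sumP_mul_pd_sumP,
    Toda.sum_sumP_mul_pd_sumP, Toda.sum_sumP_mul_pd_sumP]
  exact Toda.nestedBracket_cyclic _ _ _ _ _
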